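/- arXiv:1607.04604 — 2 statements merged into one kernel-verified Lean document; each statement's English description precedes it below -/
import Mathlib

section
/- For every natural number n and every positive natural number m, the sum over i from 0 to m-1 of floor((n+i)/(2m)) equals n/2 - m * Zigzag(n/(2m)). -/
def Zigzag (x : ℚ) : ℚ := min (x - ⌊x⌋) (⌈x⌉ - x)

/-! Write `n = 2mq + r` with `r < 2m`. The `i`-th summand is `q`, plus a carry exactly when
`r + i ≥ 2m`, so the sum is `mq + max (r - m) 0`. On the other side `fract (n / 2m) = r / 2m`,
hence `m · Zigzag (n / 2m) = min (r / 2) (m - r / 2)`, and `n / 2` minus this is the same number. -/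

theorem zigzag_eq_min_fract (x : ℚ) : Zigzag x = min (Int.fract x) (1 - Int.fract x) := by
  rcases eq_or_ne (Int.fract x) 0 with h | h
  · obtain ⟨z, rfl⟩ := Int.fract_eq_zero_iff.1 h
    simp [Zigzag]
  · rw [Zigzag, Int.self_sub_floor, Int.ceil_sub_self_eq h]

theorem Nat.sum_range_add_div (n : ℕ) {m d : ℕ} (hd : 0 < d) (hmd : m ≤ d) :
    ∑ i ∈ Finset.range m, (n + i) / d = m * (n / d) + (n % d + m - d) := by
  have hr := Nat.mod_lt n hd
  induction m with
  | zero => rw [Finset.sum_range_zero]; omega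
  | succ m ih =>
    have carry : (n % d + m) / d = if d ≤ n % d + m then 1 else 0 := by
      split_ifs with h
      · exact Nat.div_eq_of_lt_le (by omega) (by omega)
      · exact Nat.div_eq_of_lt (by omega)
    have div_eq : (n + m) / d = (n % d + m) / d + n / d := by
      conv_lhs => rw [← Nat.mod_add_div n d, add_right_comm]
      exact Nat.add_mul_div_left _ _ hd
    rw [Finset.sum_range_succ, ih (by omega), div_eq, carry, Nat.succ_mul]
    split_ifs <;> omega

theorem half_sub_mul_zigzag_div (n : ℕ) {m : ℕ} (hm : 0 < m) :
    (n : ℚ) / 2 - m * Zigzag (n / (2 * m))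
      = m * (n / (2 * m) : ℕ) + (n % (2 * m) + m - 2 * m : ℕ) := by
  set q := n / (2 * m)
  set r := n % (2 * m)
  have hr : r < 2 * m := Nat.mod_lt _ (by omega)
  have hn : (n : ℚ) = 2 * m * q + r := by exact_mod_cast (Nat.div_add_mod n (2 * m)).symm
  have hfract : Int.fract ((n : ℚ) / (2 * m)) = r / (2 * m) := by
    exact_mod_cast Int.fract_div_natCast_eq_div_natCast_mod (k := ℚ) (m := n) (n := 2 * m)
  have hmin : m * min ((r : ℚ) / (2 * m)) (1 - r / (2 * m)) = min ((r : ℚ) / 2) (m - r / 2) := by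
    rw [mul_min_of_nonneg _ _ (by positivity)]
    congr 1 <;> field_simp
  rw [zigzag_eq_min_fract, hfract, hmin, hn]
  rcases le_total r m with h | h
  · have : (r : ℚ) ≤ m := by exact_mod_cast h
    rw [Nat.sub_eq_zero_of_le (by omega), min_eq_left (by linarith)]
    push_cast; ring
  · have : (m : ℚ) ≤ r := by exact_mod_cast h
    rw [min_eq_right (by linarith), Nat.cast_sub (by omega)]
    push_cast; ring

theorem sum_floor_eq_half_sub_zigzag (n m : ℕ) (hm : 0 < m) :
    ((∑ i ∈ Finset.range m, ⌊((n : ℚ) + i) / (2 * m)⌋ : ℤ) : ℚ)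
      = (n : ℚ) / 2 - m * Zigzag ((n : ℚ) / (2 * m)) := by
  have floor_eq (i : ℕ) : ⌊((n : ℚ) + i) / (2 * m)⌋ = (((n + i) / (2 * m) : ℕ) : ℤ) := by
    exact_mod_cast Rat.floor_natCast_div_natCast (n + i) (2 * m)
  simp_rw [floor_eq]
  rw [half_sub_mul_zigzag_div n hm, ← Nat.cast_sum, Nat.sum_range_add_div n (by omega) (by omega)]
  norm_cast
end

section
/- Let B : N -> N satisfy B(1) = 0 and B(n) = floor(n/2) + B(floor(n/2)) + B(ceil(n/2)) for n >= 2. Then for every positive natural number n, B(n) = (n*ceil(log2 n))/2 - (1/2) * sum over k from 1 to ceil(log2 n) of 2^k * Zigzag(n/2^k), as an equality of rationals. -/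
def distNearestMul (b n : ℕ) : ℕ := min (n % b) (b - n % b)

theorem distNearestMul_add_mul (b r q : ℕ) : distNearestMul b (r + b * q) = distNearestMul b r := by
  simp only [distNearestMul, Nat.add_mul_mod_self_left]

theorem distNearestMul_of_le {b r : ℕ} (h : r ≤ b) : distNearestMul b r = min r (b - r) := by
  rcases h.lt_or_eq with h | rfl
  · rw [distNearestMul, Nat.mod_eq_of_lt h]
  · simp [distNearestMul]

theorem distNearestMul_two (n : ℕ) : distNearestMul 2 n = n % 2 := by
  unfold distNearestMul; omega

theorem distNearestMul_one {b : ℕ} (hb : 1 < b) : distNearestMul b 1 = 1 := by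
  rw [distNearestMul_of_le hb.le]; omega

theorem distNearestMul_two_mul {b : ℕ} (hb : Even b) (n : ℕ) :
    distNearestMul (2 * b) n = distNearestMul b (n / 2) + distNearestMul b ((n + 1) / 2) := by
  rcases Nat.eq_zero_or_pos b with rfl | hb0
  · simp [distNearestMul]
  obtain ⟨R, q, hR, rfl⟩ : ∃ R q, R < 2 * b ∧ n = R + 2 * b * q :=
    ⟨n % (2 * b), n / (2 * b), Nat.mod_lt _ (by omega), (Nat.mod_add_div n _).symm⟩
  have hlo : (R + 2 * b * q) / 2 = R / 2 + b * q := by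
    rw [mul_assoc, Nat.add_mul_div_left _ _ two_pos]
  have hhi : (R + 2 * b * q + 1) / 2 = (R + 1) / 2 + b * q := by
    rw [add_right_comm, mul_assoc, Nat.add_mul_div_left _ _ two_pos]
  obtain ⟨c, rfl⟩ := hb
  rw [hlo, hhi, distNearestMul_add_mul, distNearestMul_add_mul, distNearestMul_add_mul,
    distNearestMul_of_le hR.le, distNearestMul_of_le (by omega), distNearestMul_of_le (by omega)]
  omega

theorem ceil_half_toNat (n : ℕ) : (⌈(n : ℚ) / 2⌉).toNat = (n + 1) / 2 := by
  rw [show ((2 : ℚ)) = ((2 : ℕ) : ℚ) by norm_num, Rat.ceil_natCast_div_natCast]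
  omega

theorem zigzag_add_intCast (x : ℚ) (z : ℤ) : Zigzag (x + z) = Zigzag x := by
  simp only [Zigzag, Int.floor_add_intCast, Int.ceil_add_intCast, Int.cast_add]
  ring_nf

theorem natCast_mul_zigzag_div {b : ℕ} (hb : 0 < b) (n : ℕ) :
    (b : ℚ) * Zigzag (n / b) = distNearestMul b n := by
  have hbq : (0 : ℚ) < b := by exact_mod_cast hb
  have hr : n % b < b := Nat.mod_lt _ hb
  have hsplit : (n : ℚ) / b = (n % b : ℕ) / b + ((n / b : ℕ) : ℤ) := by
    rw [Int.cast_natCast, div_add' _ _ _ hbq.ne']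
    exact_mod_cast congrArg (fun m : ℕ => (m : ℚ) / b) (Nat.mod_add_div' n b).symm
  rw [hsplit, zigzag_add_intCast, distNearestMul, Nat.cast_min, Nat.cast_sub hr.le]
  rcases Nat.eq_zero_or_pos (n % b) with h0 | hpos
  · simp [h0, Zigzag]
  have hfloor : ⌊((n % b : ℕ) : ℚ) / b⌋ = 0 := by
    rw [Int.floor_eq_zero_iff]; constructor
    · positivity
    · exact (div_lt_one hbq).2 (by exact_mod_cast hr)
  have hceil : ⌈((n % b : ℕ) : ℚ) / b⌉ = 1 := by
    rw [Int.ceil_eq_iff, Int.cast_one, sub_self]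
    exact ⟨by positivity, (div_le_one hbq).2 (by exact_mod_cast hr.le)⟩
  rw [Zigzag, hfloor, hceil, mul_min_of_nonneg _ _ hbq.le]
  field_simp
  push_cast
  ring_nf

theorem two_mul_add_sum_distNearestMul {B : ℕ → ℕ} (hB1 : B 1 = 0)
    (hB : ∀ n, 2 ≤ n → B n = n / 2 + B (n / 2) + B ((n + 1) / 2)) {n M : ℕ} (hn : 0 < n)
    (hM : n ≤ 2 ^ M) :
    2 * B n + ∑ k ∈ Finset.range M, distNearestMul (2 ^ (k + 1)) n = n * M := by
  induction n using Nat.strong_induction_on generalizing M with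
  | _ n ih =>
  rcases (Nat.succ_le_of_lt hn).eq_or_lt with rfl | hn2
  · rw [hB1, Finset.sum_congr rfl fun k _ => distNearestMul_one (Nat.one_lt_two_pow k.succ_ne_zero)]
    simp
  obtain _ | N := M
  · rw [pow_zero] at hM; omega
  have hlo := ih (n / 2) (by omega) (by omega) (M := N) (by rw [pow_succ] at hM; omega)
  have hhi := ih ((n + 1) / 2) (by omega) (by omega) (M := N) (by rw [pow_succ] at hM; omega)
  have hsplit : ∀ k, distNearestMul (2 ^ (k + 1 + 1)) n =
      distNearestMul (2 ^ (k + 1)) (n / 2) + distNearestMul (2 ^ (k + 1)) ((n + 1) / 2) := fun k => by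
    rw [pow_succ', distNearestMul_two_mul (Nat.even_pow.2 ⟨even_two, k.succ_ne_zero⟩)]
  have hmul : n / 2 * N + (n + 1) / 2 * N = n * N := by
    rw [← add_mul, show n / 2 + (n + 1) / 2 = n by omega]
  rw [Finset.sum_range_succ', Finset.sum_congr rfl fun k _ => hsplit k, Finset.sum_add_distrib,
    zero_add, pow_one, distNearestMul_two, hB n hn2, Nat.mul_succ]
  omega

theorem B_eq_clog_formula (B : ℕ → ℕ) (hB1 : B 1 = 0)
    (hB : ∀ n, 2 ≤ n → B n = n / 2 + B (n / 2) + B ((⌈(n : ℚ) / 2⌉).toNat)) :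
    ∀ n : ℕ, 0 < n →
      (B n : ℚ) = (n : ℚ) * Nat.clog 2 n / 2
        - (1 / 2) * ∑ k ∈ Finset.Icc 1 (Nat.clog 2 n),
            (2 : ℚ) ^ k * Zigzag ((n : ℚ) / 2 ^ k) := by
  intro n hn
  have hB' : ∀ n, 2 ≤ n → B n = n / 2 + B (n / 2) + B ((n + 1) / 2) := fun n h => by
    rw [hB n h, ceil_half_toNat]
  have hcount := two_mul_add_sum_distNearestMul hB1 hB' hn (Nat.le_pow_clog one_lt_two n)
  have hzigzag : ∑ k ∈ Finset.Icc 1 (Nat.clog 2 n), (2 : ℚ) ^ k * Zigzag ((n : ℚ) / 2 ^ k) =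
      ∑ k ∈ Finset.range (Nat.clog 2 n), (distNearestMul (2 ^ (k + 1)) n : ℚ) := by
    rw [← Finset.Ico_add_one_right_eq_Icc, Finset.sum_Ico_eq_sum_range, add_tsub_cancel_right]
    refine Finset.sum_congr rfl fun k _ => ?_
    rw [add_comm 1 k]
    exact_mod_cast natCast_mul_zigzag_div (Nat.two_pow_pos (k + 1)) n
  rw [hzigzag]
  have hcast := congrArg (Nat.cast : ℕ → ℚ) hcount
  push_cast at hcast
  linarith
end
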